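/- arXiv:2511.22591 — 9 statements merged into one kernel-verified Lean document; each statement's English description precedes it below -/
import Mathlib

section
/- Let a, b be distinct points of the open unit disk 𝔹² ⊂ ℂ and let c ∈ ℂ with |c| > 1 be such that |a−c|² = |c|² − 1 and |b−c|² = |c|² − 1 (so a and b lie on the circle with center c orthogonal to the unit circle). Then the point cen := (a(1−|b|²) + b(1−|a|²))/(2 − a·conj(b) − conj(a)·b) lies on the tangent line to that circle at a and on the tangent line at b; that is, Re((cen − a)·conj(a − c)) = 0 and Re((cen − b)·conj(b − c)) = 0. -/
/-!
The denominator `d = 2 - a b̄ - ā b = 2 - 2 Re (a b̄)` is real and positive, and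
`cen - a = (a b̄ - 1)(a - b) / d`. The circle condition says `z z̄ - z c̄ - z̄ c + 1 = 0` for
`z = a, b`, and twice `Re ((a b̄ - 1)(a - b) conj (a - c))` is a polynomial combination of these
two equations, hence zero. Since `cen` is symmetric in `a` and `b`, the tangent at `b` follows.
-/

open Complex ComplexConjugate

noncomputable def tangentsMeet (a b : ℂ) : ℂ :=
  (a * (1 - (‖b‖ : ℂ) ^ 2) + b * (1 - (‖a‖ : ℂ) ^ 2)) / (2 - a * conj b - conj a * b)

theorem tangentsMeet_comm (a b : ℂ) : tangentsMeet a b = tangentsMeet b a := by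
  unfold tangentsMeet
  ring

theorem two_sub_mul_conj_sub_conj_mul (a b : ℂ) :
    2 - a * conj b - conj a * b = ((2 - 2 * (a * conj b).re : ℝ) : ℂ) := by
  have h : conj a * b = conj (a * conj b) := by simp [mul_comm]
  rw [sub_sub, h, add_conj]
  push_cast
  ring

theorem re_mul_conj_lt_one {a b : ℂ} (ha : ‖a‖ < 1) (hb : ‖b‖ < 1) : (a * conj b).re < 1 :=
  calc (a * conj b).re ≤ ‖a * conj b‖ := re_le_norm _
    _ = ‖a‖ * ‖b‖ := by rw [norm_mul, norm_conj]
    _ < 1 := mul_lt_one_of_nonneg_of_lt_one_left (norm_nonneg a) ha hb.le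

theorem tangentsMeet_sub_left {a b : ℂ} (hd : 2 - a * conj b - conj a * b ≠ 0) :
    tangentsMeet a b - a = (a * conj b - 1) * (a - b) / (2 - a * conj b - conj a * b) := by
  rw [tangentsMeet, ← mul_conj', ← mul_conj', div_sub' hd]
  ring

theorem mul_conj_sub_add_one_eq_zero_of_sq_norm_sub {z c : ℂ} (h : ‖z - c‖ ^ 2 = ‖c‖ ^ 2 - 1) :
    z * conj z - z * conj c - conj z * c + 1 = 0 := by
  have h' := congrArg (fun x : ℝ => (x : ℂ)) h
  push_cast at h'
  rw [← mul_conj', ← mul_conj', map_sub] at h'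
  linear_combination h'

theorem re_mul_conj_sub_one_mul_sub_mul_conj_sub {a b c : ℂ}
    (hac : ‖a - c‖ ^ 2 = ‖c‖ ^ 2 - 1) (hbc : ‖b - c‖ ^ 2 = ‖c‖ ^ 2 - 1) :
    ((a * conj b - 1) * (a - b) * conj (a - c)).re = 0 := by
  have hA := mul_conj_sub_add_one_eq_zero_of_sq_norm_sub hac
  have hB := mul_conj_sub_add_one_eq_zero_of_sq_norm_sub hbc
  have h : (a * conj b - 1) * (a - b) * conj (a - c)
      + conj ((a * conj b - 1) * (a - b) * conj (a - c)) = 0 := by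
    simp only [map_mul, map_sub, map_one, conj_conj]
    linear_combination (a * conj b + conj a * b - 1 - b * conj b) * hA + (1 - a * conj a) * hB
  rw [add_conj, ofReal_eq_zero] at h
  exact (mul_eq_zero.mp h).resolve_left two_ne_zero

theorem re_tangentsMeet_sub_mul_conj_sub {a b c : ℂ} (ha : ‖a‖ < 1) (hb : ‖b‖ < 1)
    (hac : ‖a - c‖ ^ 2 = ‖c‖ ^ 2 - 1) (hbc : ‖b - c‖ ^ 2 = ‖c‖ ^ 2 - 1) :
    ((tangentsMeet a b - a) * conj (a - c)).re = 0 := by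
  have hd : 2 - a * conj b - conj a * b ≠ 0 := by
    rw [two_sub_mul_conj_sub_conj_mul, ofReal_ne_zero]
    linarith [re_mul_conj_lt_one ha hb]
  rw [tangentsMeet_sub_left hd, div_mul_eq_mul_div, two_sub_mul_conj_sub_conj_mul, div_ofReal_re,
    re_mul_conj_sub_one_mul_sub_mul_conj_sub hac hbc, zero_div]

theorem stmt_2_general (a b c : ℂ) (ha : ‖a‖ < 1) (hb : ‖b‖ < 1)
    (hac : (‖a - c‖)^2 = (‖c‖)^2 - 1)
    (hbc : (‖b - c‖)^2 = (‖c‖)^2 - 1) :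
    let cen : ℂ := (a * (1 - (‖b‖ : ℂ)^2) + b * (1 - (‖a‖ : ℂ)^2)) /
      (2 - a * (starRingEnd ℂ b) - (starRingEnd ℂ a) * b)
    ((cen - a) * (starRingEnd ℂ (a - c))).re = 0 ∧
      ((cen - b) * (starRingEnd ℂ (b - c))).re = 0 := by
  show ((tangentsMeet a b - a) * conj (a - c)).re = 0 ∧
    ((tangentsMeet a b - b) * conj (b - c)).re = 0
  refine ⟨re_tangentsMeet_sub_mul_conj_sub ha hb hac hbc, ?_⟩
  rw [tangentsMeet_comm]
  exact re_tangentsMeet_sub_mul_conj_sub hb ha hbc hac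

/-- The point `cen = (a(1−|b|²)+b(1−|a|²))/(2−a·conj b−conj a·b)` is the intersection of the
tangent lines, at `a` and at `b`, to the circle through `a, b` with center `c`
orthogonal to the unit circle. -/
theorem stmt_2 (a b c : ℂ) (ha : ‖a‖ < 1) (hb : ‖b‖ < 1)
    (hab : a ≠ b) (hc : 1 < ‖c‖)
    (hac : (‖a - c‖)^2 = (‖c‖)^2 - 1)
    (hbc : (‖b - c‖)^2 = (‖c‖)^2 - 1) :
    let cen : ℂ := (a * (1 - (‖b‖ : ℂ)^2) + b * (1 - (‖a‖ : ℂ)^2)) /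
      (2 - a * (starRingEnd ℂ b) - (starRingEnd ℂ a) * b)
    ((cen - a) * (starRingEnd ℂ (a - c))).re = 0 ∧
      ((cen - b) * (starRingEnd ℂ (b - c))).re = 0 :=
  stmt_2_general a b c ha hb hac hbc
end

section
/- For c > 0 let f(t) = 2·arsinh(c·sinh(t/2)) and g(t) = c·t for t > 0. If 0 < c < 1, then the function t ↦ f(t)/g(t) is strictly increasing on (0,∞) and c·t ≤ 2·arsinh(c·sinh(t/2)) ≤ t for all t ≥ 0. If c > 1, then t ↦ f(t)/g(t) is strictly decreasing on (0,∞) and t ≤ 2·arsinh(c·sinh(t/2)) ≤ c·t for all t ≥ 0. -/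
/-!
Put `F c s = arsinh (c * sinh s)`, so that `f(t) / g(t) = (F c (t/2) / (t/2)) / c`. A computation gives
`F'' = c (1 - c²) sinh s / (1 + c² sinh² s)^(3/2)`, so on `[0, ∞)` the function `F c` is strictly
convex for `c < 1` and strictly concave for `c > 1`. Since `F c 0 = 0`, the slope `F c s / s` of the
chord from the origin is then strictly monotone in the corresponding direction. For the bounds,
monotonicity of `arsinh` turns `F c s ≤ s` (resp. `s ≤ F c s`) into `c sinh s ≤ sinh s`, and
`c s ≤ F c s` (resp. `F c s ≤ c s`) into a comparison of `sinh (c s)` with `c sinh s`, which is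
convexity of `sinh` on `[0, ∞)` together with `sinh 0 = 0`.
-/

open Real Set

section ChordSlope

variable {𝕜 : Type*} [Field 𝕜] [LinearOrder 𝕜] [IsStrictOrderedRing 𝕜] {f : 𝕜 → 𝕜}

theorem StrictConvexOn.strictMonoOn_div_self (hf : StrictConvexOn 𝕜 (Ici 0) f) (hf0 : f 0 = 0) :
    StrictMonoOn (fun x => f x / x) (Ioi 0) := fun x hx y hy hxy => by
  simpa [hf0] using hf.secant_strict_mono self_mem_Ici (Ioi_subset_Ici_self hx)
    (Ioi_subset_Ici_self hy) hx.ne' hy.ne' hxy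

theorem StrictConcaveOn.strictAntiOn_div_self (hf : StrictConcaveOn 𝕜 (Ici 0) f) (hf0 : f 0 = 0) :
    StrictAntiOn (fun x => f x / x) (Ioi 0) := fun x hx y hy hxy => by
  simpa [hf0] using hf.secant_strict_mono self_mem_Ici (Ioi_subset_Ici_self hx)
    (Ioi_subset_Ici_self hy) hx.ne' hy.ne' hxy

theorem ConvexOn.map_mul_le_mul (hf : ConvexOn 𝕜 (Ici 0) f) (hf0 : f 0 = 0) {a x : 𝕜}
    (ha₀ : 0 ≤ a) (ha₁ : a ≤ 1) (hx : 0 ≤ x) : f (a * x) ≤ a * f x := by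
  simpa [hf0] using hf.2 (mem_Ici.2 hx) self_mem_Ici ha₀ (sub_nonneg.2 ha₁) (add_sub_cancel a 1)

theorem ConvexOn.mul_map_le_map_mul (hf : ConvexOn 𝕜 (Ici 0) f) (hf0 : f 0 = 0) {a x : 𝕜}
    (ha : 1 ≤ a) (hx : 0 ≤ x) : a * f x ≤ f (a * x) := by
  have ha₀ : 0 < a := zero_lt_one.trans_le ha
  have := hf.map_mul_le_mul hf0 (inv_nonneg.2 ha₀.le) (inv_le_one_of_one_le₀ ha)
    (mul_nonneg ha₀.le hx)
  rwa [inv_mul_cancel_left₀ ha₀.ne', le_inv_mul_iff₀ ha₀] at this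

end ChordSlope

namespace Real

theorem arsinh_le_iff_le_sinh {x y : ℝ} : arsinh x ≤ y ↔ x ≤ sinh y := by
  rw [← sinh_le_sinh, sinh_arsinh]

theorem le_arsinh_iff_sinh_le {x y : ℝ} : y ≤ arsinh x ↔ sinh y ≤ x := by
  rw [← sinh_le_sinh, sinh_arsinh]

theorem strictConvexOn_sinh_Ici : StrictConvexOn ℝ (Ici 0) sinh :=
  strictConvexOn_of_deriv2_pos (convex_Ici 0) continuous_sinh.continuousOn fun x hx => by
    rw [interior_Ici] at hx
    simpa [deriv_sinh, deriv_cosh] using hx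

end Real

noncomputable def arsinhMulSinh (c s : ℝ) : ℝ := arsinh (c * sinh s)

section arsinhMulSinh

variable {c s : ℝ}

theorem arsinhMulSinh_zero (c : ℝ) : arsinhMulSinh c 0 = 0 := by simp [arsinhMulSinh]

theorem continuous_arsinhMulSinh (c : ℝ) : Continuous (arsinhMulSinh c) :=
  (continuous_const.mul continuous_sinh).arsinh

theorem hasDerivAt_arsinhMulSinh (c s : ℝ) :
    HasDerivAt (arsinhMulSinh c) (c * cosh s / √(1 + (c * sinh s) ^ 2)) s :=
  ((hasDerivAt_sinh s).const_mul c).arsinh.congr_deriv <| by rw [smul_eq_mul, div_eq_inv_mul]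

theorem hasDerivAt_deriv_arsinhMulSinh (c s : ℝ) :
    HasDerivAt (deriv (arsinhMulSinh c))
      (c * (1 - c ^ 2) * sinh s / ((1 + (c * sinh s) ^ 2) * √(1 + (c * sinh s) ^ 2))) s := by
  have hw : HasDerivAt (fun s => 1 + (c * sinh s) ^ 2) (2 * (c * sinh s) * (c * cosh s)) s := by
    simpa using (((hasDerivAt_sinh s).const_mul c).pow 2).const_add 1
  have hw₀ : 0 < 1 + (c * sinh s) ^ 2 := by positivity
  rw [funext fun s => (hasDerivAt_arsinhMulSinh c s).deriv]
  refine (((hasDerivAt_cosh s).const_mul c).div (hw.sqrt hw₀.ne')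
    (sqrt_pos.2 hw₀).ne').congr_deriv ?_
  have hv := sq_sqrt hw₀.le
  have hv₀ := (sqrt_pos.2 hw₀).ne'
  generalize √(1 + (c * sinh s) ^ 2) = v at hv hv₀ ⊢
  rw [← hv]
  field_simp
  linear_combination (c * sinh s) * hv - (c ^ 3 * sinh s) * cosh_sq s

theorem iteratedDeriv_two_arsinhMulSinh (c s : ℝ) :
    deriv^[2] (arsinhMulSinh c) s =
      c * (1 - c ^ 2) * sinh s / ((1 + (c * sinh s) ^ 2) * √(1 + (c * sinh s) ^ 2)) :=
  (hasDerivAt_deriv_arsinhMulSinh c s).deriv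

theorem strictConvexOn_arsinhMulSinh (hc₀ : 0 < c) (hc₁ : c < 1) :
    StrictConvexOn ℝ (Ici 0) (arsinhMulSinh c) :=
  strictConvexOn_of_deriv2_pos (convex_Ici 0) (continuous_arsinhMulSinh c).continuousOn
    fun s hs => by
      rw [interior_Ici] at hs
      rw [iteratedDeriv_two_arsinhMulSinh]
      have : 0 < 1 - c ^ 2 := by nlinarith
      exact div_pos (mul_pos (mul_pos hc₀ this) (sinh_pos_iff.2 hs)) (by positivity)

theorem strictConcaveOn_arsinhMulSinh (hc : 1 < c) :
    StrictConcaveOn ℝ (Ici 0) (arsinhMulSinh c) :=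
  strictConcaveOn_of_deriv2_neg (convex_Ici 0) (continuous_arsinhMulSinh c).continuousOn
    fun s hs => by
      rw [interior_Ici] at hs
      rw [iteratedDeriv_two_arsinhMulSinh]
      have : 1 - c ^ 2 < 0 := by nlinarith
      exact div_neg_of_neg_of_pos
        (mul_neg_of_neg_of_pos (mul_neg_of_pos_of_neg (by linarith) this) (sinh_pos_iff.2 hs))
        (by positivity)

theorem arsinhMulSinh_le_self (hc : c ≤ 1) (hs : 0 ≤ s) : arsinhMulSinh c s ≤ s :=
  arsinh_le_iff_le_sinh.2 (mul_le_of_le_one_left (sinh_nonneg_iff.2 hs) hc)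

theorem self_le_arsinhMulSinh (hc : 1 ≤ c) (hs : 0 ≤ s) : s ≤ arsinhMulSinh c s :=
  le_arsinh_iff_sinh_le.2 (le_mul_of_one_le_left (sinh_nonneg_iff.2 hs) hc)

theorem mul_le_arsinhMulSinh (hc₀ : 0 ≤ c) (hc₁ : c ≤ 1) (hs : 0 ≤ s) :
    c * s ≤ arsinhMulSinh c s :=
  le_arsinh_iff_sinh_le.2 (strictConvexOn_sinh_Ici.convexOn.map_mul_le_mul sinh_zero hc₀ hc₁ hs)

theorem arsinhMulSinh_le_mul (hc : 1 ≤ c) (hs : 0 ≤ s) : arsinhMulSinh c s ≤ c * s :=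
  arsinh_le_iff_le_sinh.2 (strictConvexOn_sinh_Ici.convexOn.mul_map_le_map_mul sinh_zero hc hs)

end arsinhMulSinh

/-- Proposition 3.4: for `c > 0` let `f(t) = 2·arsinh(c·sinh(t/2))` and `g(t) = c·t`.
If `0 < c < 1` then `f/g` is strictly increasing on `(0,∞)` and `c·t ≤ f(t) ≤ t` for `t ≥ 0`;
if `c > 1` then `f/g` is strictly decreasing on `(0,∞)` and `t ≤ f(t) ≤ c·t` for `t ≥ 0`. -/
theorem stmt_5 (c : ℝ) (hc : 0 < c) :
    ((c < 1 →
      StrictMonoOn (fun t : ℝ => (2 * Real.arsinh (c * Real.sinh (t / 2))) / (c * t))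
        (Set.Ioi (0 : ℝ)) ∧
      ∀ t : ℝ, 0 ≤ t →
        c * t ≤ 2 * Real.arsinh (c * Real.sinh (t / 2)) ∧
          2 * Real.arsinh (c * Real.sinh (t / 2)) ≤ t) ∧
    (1 < c →
      StrictAntiOn (fun t : ℝ => (2 * Real.arsinh (c * Real.sinh (t / 2))) / (c * t))
        (Set.Ioi (0 : ℝ)) ∧
      ∀ t : ℝ, 0 ≤ t →
        t ≤ 2 * Real.arsinh (c * Real.sinh (t / 2)) ∧
          2 * Real.arsinh (c * Real.sinh (t / 2)) ≤ c * t)) := by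
  have hratio : (fun t : ℝ => (2 * Real.arsinh (c * Real.sinh (t / 2))) / (c * t)) =
      (fun s => arsinhMulSinh c s / s / c) ∘ (· / 2) := by
    funext t
    simp only [Function.comp_apply, arsinhMulSinh]
    ring
  have hhalf : StrictMonoOn (fun t : ℝ => t / 2) (Ioi 0) := fun _ _ _ _ h => by linarith
  have hmaps : MapsTo (fun t : ℝ => t / 2) (Ioi 0) (Ioi 0) := fun _ ht => half_pos (mem_Ioi.1 ht)
  refine ⟨fun hc₁ => ⟨?_, fun t ht => ?_⟩, fun hc₁ => ⟨?_, fun t ht => ?_⟩⟩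
  · rw [hratio]
    have hslope :=
      (strictConvexOn_arsinhMulSinh hc hc₁).strictMonoOn_div_self (arsinhMulSinh_zero c)
    exact StrictMonoOn.comp (fun x hx y hy h => div_lt_div_of_pos_right (hslope hx hy h) hc)
      hhalf hmaps
  · have h₁ := mul_le_arsinhMulSinh hc.le hc₁.le (div_nonneg ht zero_le_two)
    have h₂ := arsinhMulSinh_le_self hc₁.le (div_nonneg ht zero_le_two)
    unfold arsinhMulSinh at h₁ h₂
    constructor <;> linarith
  · rw [hratio]
    have hslope :=
      (strictConcaveOn_arsinhMulSinh hc₁).strictAntiOn_div_self (arsinhMulSinh_zero c)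
    exact StrictAntiOn.comp_strictMonoOn
      (fun x hx y hy h => div_lt_div_of_pos_right (hslope hx hy h) hc) hhalf hmaps
  · have h₁ := self_le_arsinhMulSinh hc₁.le (div_nonneg ht zero_le_two)
    have h₂ := arsinhMulSinh_le_mul hc₁.le (div_nonneg ht zero_le_two)
    unfold arsinhMulSinh at h₁ h₂
    constructor <;> linarith
end

section
/- Let a, b be distinct points of the open unit disk 𝔹² ⊂ ℂ, and let u, v be points with |u| = |v| = 1 lying on the line through a and b, ordered so that u, a, b, v occur in this order on the line (i.e. a lies on the segment [u,b] and b lies on the segment [a,v]). Let m be the Euclidean distance from the origin to the line through a and b. Then sinh((1/2)·log((|u−b|·|a−v|)/(|u−a|·|b−v|))) = √(1−m²)·|a−b|/√((1−|a|²)(1−|b|²)). (That is, sinh(h(a,b)/2) = √(1−m²)·sinh(ρ(a,b)/2).) -/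
/-!
With `X = |u-b|·|a-v|` and `Y = |u-a|·|b-v|` one has `sinh(½ log(X/Y)) = (X-Y)/(2√(XY))`.
Since `u, a, b, v` lie in this order on a line, distances along it add up, which gives
`X - Y = |u-v|·|a-b|`. By the power of a point, `|u-a|·|a-v| = 1-|a|²` and `|u-b|·|b-v| = 1-|b|²`,
so `XY = (1-|a|²)(1-|b|²)`. Finally the midpoint of the chord `uv` is the foot of the perpendicular
from the origin, so Pythagoras gives `|u-v| = 2√(1-m²)`.
-/

namespace Real

theorem sinh_half_log_div {x y : ℝ} (hx : 0 < x) (hy : 0 < y) :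
    sinh (1 / 2 * log (x / y)) = (x - y) / (2 * √(x * y)) := by
  have hxy : 0 < x / y := div_pos hx hy
  rw [one_div_mul_eq_div, ← log_sqrt hxy.le, sinh_log (sqrt_pos.2 hxy), sqrt_div' x hy.le,
    sqrt_mul hx.le]
  have := sqrt_pos.2 hx
  have := sqrt_pos.2 hy
  field_simp
  rw [sq_sqrt hx.le, sq_sqrt hy.le]

end Real

theorem coe_affineSpan_pair {k E : Type*} [Ring k] [AddCommGroup E] [Module k E] (a b : E) :
    (line[k, a, b] : Set E) = {z | ∃ t : k, z = a + t • (b - a)} := by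
  ext z
  simp [mem_affineSpan_pair_iff_exists_lineMap_eq, AffineMap.lineMap_apply_module', eq_comm,
    add_comm]

theorem Wbtw.mul_dist_add_mul_dist_eq_mul_dist {V P : Type*} [SeminormedAddCommGroup V]
    [NormedSpace ℝ V] [PseudoMetricSpace P] [NormedAddTorsor V P] {u a b v : P}
    (h₁ : Wbtw ℝ u a b) (h₂ : Wbtw ℝ a b v) :
    dist u a * dist b v + dist a b * dist u v = dist u b * dist a v := by
  rcases eq_or_ne a b with rfl | hab
  · simp
  rw [← h₁.dist_add_dist, ← h₂.dist_add_dist, ← (h₁.trans_expand_left h₂ hab).dist_add_dist,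
    ← h₂.dist_add_dist]
  ring

namespace EuclideanGeometry

variable {V P : Type*} [NormedAddCommGroup V] [InnerProductSpace ℝ V] [MetricSpace P]
  [NormedAddTorsor V P]

theorem orthogonalProjection_affineSpan_pair_eq_midpoint {u v c : P} (h : dist u c = dist v c) :
    (orthogonalProjection line[ℝ, u, v] c : P) = midpoint ℝ u v := by
  rw [coe_orthogonalProjection_eq_iff_mem]
  refine ⟨(wbtw_midpoint ℝ u v).mem_affineSpan, ?_⟩
  rw [direction_affineSpan, vectorSpan_pair_rev, Submodule.mem_orthogonal_singleton_iff_inner_left]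
  exact inner_vsub_vsub_of_dist_eq_of_dist_eq (dist_left_midpoint_eq_dist_right_midpoint u v) h

theorem Sphere.dist_eq_two_mul_sqrt_radius_sq_sub_infDist_sq {s : Sphere P} {u v : P}
    (hu : u ∈ s) (hv : v ∈ s) :
    dist u v = 2 * √(s.radius ^ 2 - Metric.infDist s.center line[ℝ, u, v] ^ 2) := by
  have hfoot := orthogonalProjection_affineSpan_pair_eq_midpoint
    ((mem_sphere.1 hu).trans (mem_sphere.1 hv).symm)
  have hpythagoras := dist_sq_eq_dist_orthogonalProjection_sq_add_dist_orthogonalProjection_sq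
    s.center (left_mem_affineSpan_pair ℝ u v)
  rw [hfoot, mem_sphere.1 hu, dist_left_midpoint (𝕜 := ℝ), Real.norm_two] at hpythagoras
  rw [← dist_orthogonalProjection_eq_infDist, hfoot,
    show s.radius ^ 2 - dist s.center (midpoint ℝ u v) ^ 2 = (dist u v / 2) ^ 2 by
      linear_combination hpythagoras,
    Real.sqrt_sq (by positivity)]
  ring

end EuclideanGeometry

section UnitSphere

variable {E : Type*} [NormedAddCommGroup E] [InnerProductSpace ℝ E] {u v : E}

theorem dist_mul_dist_eq_one_sub_norm_sq {p : E} (hu : ‖u‖ = 1) (hv : ‖v‖ = 1)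
    (hp : p ∈ line[ℝ, u, v]) (hp₁ : ‖p‖ ≤ 1) : dist p u * dist p v = 1 - ‖p‖ ^ 2 := by
  rw [EuclideanGeometry.Sphere.mul_dist_eq_neg_power_of_dist_center_le_radius (s := ⟨0, 1⟩)
    zero_le_one hp (EuclideanGeometry.mem_sphere.2 (by simpa using hu))
    (EuclideanGeometry.mem_sphere.2 (by simpa using hv)) (by simpa using hp₁),
    EuclideanGeometry.Sphere.power]
  simp

theorem dist_eq_two_mul_sqrt_one_sub_infDist_sq (hu : ‖u‖ = 1) (hv : ‖v‖ = 1) :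
    dist u v = 2 * √(1 - Metric.infDist (0 : E) line[ℝ, u, v] ^ 2) := by
  simpa using EuclideanGeometry.Sphere.dist_eq_two_mul_sqrt_radius_sq_sub_infDist_sq
    (s := ⟨0, 1⟩) (EuclideanGeometry.mem_sphere.2 (by simpa using hu))
    (EuclideanGeometry.mem_sphere.2 (by simpa using hv))

end UnitSphere

/-- Theorem 3.3 (Hilbert vs hyperbolic in the unit disk):
`sinh(h(a,b)/2) = √(1−m²)·sinh(ρ(a,b)/2)`, where `m` is the Euclidean distance from the
origin to the line through `a` and `b`, and `u, a, b, v` occur in this order on that line,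
with `u, v` on the unit circle. -/
theorem stmt_6 (a b u v : ℂ) (ha : ‖a‖ < 1) (hb : ‖b‖ < 1) (hab : a ≠ b)
    (hu : ‖u‖ = 1) (hv : ‖v‖ = 1)
    (hua : a ∈ segment ℝ u b) (hbv : b ∈ segment ℝ a v) :
    Real.sinh ((1 / 2) *
        Real.log ((‖u - b‖ * ‖a - v‖) /
          (‖u - a‖ * ‖b - v‖))) =
      Real.sqrt (1 - (Metric.infDist (0 : ℂ) {z : ℂ | ∃ t : ℝ, z = a + t • (b - a)})^2) *
        (‖a - b‖ /
          Real.sqrt ((1 - (‖a‖)^2) * (1 - (‖b‖)^2))) := by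
  rw [mem_segment_iff_wbtw] at hua hbv
  have hline : line[ℝ, a, b] = line[ℝ, u, v] :=
    affineSpan_pair_eq_of_mem_of_mem_of_ne (hua.trans_expand_left hbv hab).mem_affineSpan
      (hua.trans_expand_right hbv hab).mem_affineSpan hab
  have hpow_a := dist_mul_dist_eq_one_sub_norm_sq hu hv
    (hline ▸ left_mem_affineSpan_pair ℝ a b) ha.le
  have hpow_b := dist_mul_dist_eq_one_sub_norm_sq hu hv
    (hline ▸ right_mem_affineSpan_pair ℝ a b) hb.le
  have hptolemy := hua.mul_dist_add_mul_dist_eq_mul_dist hbv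
  have hdist_pos {p w : ℂ} (hp : ‖p‖ < 1) (hw : ‖w‖ = 1) : 0 < dist p w :=
    dist_pos.2 fun h => by rw [h] at hp; linarith
  simp only [← dist_eq_norm]
  rw [dist_comm u a, dist_comm u b] at hptolemy ⊢
  rw [← coe_affineSpan_pair, hline,
    Real.sinh_half_log_div (mul_pos (hdist_pos hb hu) (hdist_pos ha hv))
      (mul_pos (hdist_pos ha hu) (hdist_pos hb hv)),
    show dist b u * dist a v * (dist a u * dist b v) = (1 - ‖a‖ ^ 2) * (1 - ‖b‖ ^ 2) by
      rw [← hpow_a, ← hpow_b]; ring,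
    ← hptolemy, add_sub_cancel_left, dist_eq_two_mul_sqrt_one_sub_infDist_sq hu hv]
  ring
end

section
/- Let a, b be distinct points of the open unit disk 𝔹² ⊂ ℂ, and let u, v be points with |u| = |v| = 1 lying on the line through a and b, ordered so that u, a, b, v occur in this order on the line. Let m be the Euclidean distance from the origin to the line through a and b, and set h(a,b) := log((|u−b|·|a−v|)/(|u−a|·|b−v|)) and ρ(a,b) := 2·arsinh(|a−b|/√((1−|a|²)(1−|b|²))). Then h(a,b) ≤ ρ(a,b) ≤ h(a,b)/√(1−m²). -/
/-!
Write `a = lineMap u v α` and `b = lineMap u v β` with `0 ≤ α ≤ β ≤ 1`, and let `L = ‖u - v‖` be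
the length of the chord. By the power of a point, `‖u - a‖ * ‖a - v‖ = 1 - ‖a‖ ^ 2`, and for four
points in this order on a line `‖u - b‖ * ‖a - v‖ = ‖u - a‖ * ‖b - v‖ + ‖a - b‖ * L`. Inserting
both into `log (Q / P) = 2 * arsinh ((Q - P) / (2 * √(P * Q)))` gives
`sinh (h / 2) = (L / 2) * sinh (ρ / 2)`. The origin is closest to the chord at its midpoint, so
`√(1 - m ^ 2) = L / 2 ≤ 1`, and the two inequalities are the monotonicity of `arsinh` and its
concavity on `[0, ∞)`, in the form `k * arsinh s ≤ arsinh (k * s)` for `0 ≤ k ≤ 1`.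
-/

open Real Set Metric AffineMap

namespace Real

theorem concaveOn_arsinh : ConcaveOn ℝ (Ici 0) arsinh := by
  refine AntitoneOn.concaveOn_of_deriv (convex_Ici 0) continuous_arsinh.continuousOn
    differentiable_arsinh.differentiableOn ?_
  rw [interior_Ici]
  intro x hx y hy hxy
  simp only [(hasDerivAt_arsinh _).deriv]
  have hsq : x ^ 2 ≤ y ^ 2 := pow_le_pow_left₀ (le_of_lt hx) hxy 2
  gcongr

theorem mul_arsinh_le_arsinh_mul {k s : ℝ} (hk0 : 0 ≤ k) (hk1 : k ≤ 1) (hs : 0 ≤ s) :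
    k * arsinh s ≤ arsinh (k * s) := by
  simpa using concaveOn_arsinh.2 (mem_Ici.2 hs) self_mem_Ici hk0 (sub_nonneg.2 hk1) (by ring)

theorem log_div_eq_two_mul_arsinh {P Q : ℝ} (hP : 0 < P) (hQ : 0 < Q) :
    log (Q / P) = 2 * arsinh ((Q - P) / (2 * √(P * Q))) := by
  have hy : 0 < √Q / √P := by positivity
  have hsinh : sinh (log (√Q / √P)) = (Q - P) / (2 * √(P * Q)) := by
    rw [sinh_log hy, sqrt_mul hP.le]
    field_simp
    rw [sq_sqrt hP.le, sq_sqrt hQ.le]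
  have hsq : (√Q / √P) ^ 2 = Q / P := by rw [div_pow, sq_sqrt hP.le, sq_sqrt hQ.le]
  rw [← hsinh, arsinh_sinh, ← hsq, log_pow]
  norm_num

end Real

theorem exists_lineMap_of_mem_segment {𝕜 E : Type*} [Field 𝕜] [LinearOrder 𝕜]
    [IsStrictOrderedRing 𝕜] [AddCommGroup E] [Module 𝕜 E] {a b u v : E}
    (hab : a ≠ b) (hua : a ∈ segment 𝕜 u b) (hbv : b ∈ segment 𝕜 a v) :
    ∃ α β : 𝕜, 0 ≤ α ∧ α ≤ β ∧ β ≤ 1 ∧ a = lineMap u v α ∧ b = lineMap u v β := by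
  obtain ⟨p', p, hp', hp, hpp, ha⟩ := hua
  obtain ⟨q', q, hq', hq, hqq, hb⟩ := hbv
  obtain rfl : p' = 1 - p := by linarith
  obtain rfl : q' = 1 - q := by linarith
  have hD : 0 < 1 - p + p * q := by
    by_contra! hD
    obtain rfl : p = 1 := by nlinarith
    exact hab (by simpa using ha.symm)
  have hDa : (1 - p + p * q) • a = (1 - p) • u + (p * q) • v := by
    linear_combination (norm := module) -ha - p • hb
  have hDb : (1 - p + p * q) • b = ((1 - p) * (1 - q)) • u + q • v := by
    linear_combination (norm := module) -(1 - q) • ha - hb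
  generalize hD_def : 1 - p + p * q = D at hD hDa hDb
  refine ⟨p * q / D, q / D, by positivity, ?_, ?_, ?_, ?_⟩
  · gcongr; nlinarith
  · rw [div_le_one hD]; nlinarith
  · apply smul_right_injective E hD.ne'
    simp only [hDa, lineMap_apply_module]
    match_scalars <;> field_simp
    linarith
  · apply smul_right_injective E hD.ne'
    simp only [hDb, lineMap_apply_module]
    match_scalars <;> field_simp
    linarith

section AffineLine

variable {𝕜 E : Type*} [Field 𝕜] [AddCommGroup E] [Module 𝕜 E] {u v : E} {α β : 𝕜}

theorem setOf_eq_add_smul_sub_eq_range_lineMap (a b : E) :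
    {z : E | ∃ t : 𝕜, z = a + t • (b - a)} = range (lineMap a b : 𝕜 → E) := by
  ext z
  exact exists_congr fun t ↦ by rw [eq_comm, lineMap_apply_module', add_comm]

theorem range_lineMap_lineMap (h : α ≠ β) :
    range (lineMap (lineMap u v α) (lineMap u v β) : 𝕜 → E) = range (lineMap u v : 𝕜 → E) := by
  have hsurj : Function.Surjective (lineMap α β : 𝕜 → 𝕜) := fun y ↦
    ⟨(y - α) / (β - α), by
      rw [lineMap_apply_module', smul_eq_mul, div_mul_cancel₀ _ (sub_ne_zero.2 h.symm)]; ring⟩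
  rw [← hsurj.range_comp (lineMap u v)]
  congr 1
  ext t
  exact ((lineMap u v).apply_lineMap α β t).symm

end AffineLine

section Line

variable {V : Type*} [NormedAddCommGroup V] [NormedSpace ℝ V] {u v : V} {α β : ℝ}

theorem norm_lineMap_four_point (hα : 0 ≤ α) (hαβ : α ≤ β) (hβ : β ≤ 1) :
    ‖u - lineMap u v β‖ * ‖lineMap u v α - v‖ =
      ‖u - lineMap u v α‖ * ‖lineMap u v β - v‖ +
        ‖lineMap u v α - lineMap u v β‖ * ‖u - v‖ := by
  simp only [← dist_eq_norm, dist_left_lineMap, dist_lineMap_right, dist_lineMap_lineMap,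
    Real.dist_eq, norm_eq_abs, abs_of_nonneg hα, abs_of_nonneg (hα.trans hαβ),
    abs_of_nonneg (sub_nonneg.2 hβ), abs_of_nonneg (sub_nonneg.2 (hαβ.trans hβ)),
    abs_sub_comm α β, abs_of_nonneg (sub_nonneg.2 hαβ)]
  ring

end Line

section Chord

variable {V : Type*} [NormedAddCommGroup V] [InnerProductSpace ℝ V] {u v : V} {α β : ℝ}

theorem one_sub_norm_lineMap_sq (hu : ‖u‖ = 1) (hv : ‖v‖ = 1) (r : ℝ) :
    1 - ‖lineMap u v r‖ ^ 2 = r * (1 - r) * ‖u - v‖ ^ 2 := by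
  rw [lineMap_apply_module, norm_add_sq_real, norm_sub_sq_real, norm_smul, norm_smul,
    inner_smul_left, inner_smul_right, hu, hv, mul_pow, mul_pow, norm_eq_abs, norm_eq_abs,
    sq_abs, sq_abs]
  simp only [conj_trivial]
  ring

theorem norm_sub_lineMap_mul_norm_lineMap_sub (hu : ‖u‖ = 1) (hv : ‖v‖ = 1) {r : ℝ}
    (hr₀ : 0 ≤ r) (hr₁ : r ≤ 1) :
    ‖u - lineMap u v r‖ * ‖lineMap u v r - v‖ = 1 - ‖lineMap u v r‖ ^ 2 := by
  rw [← dist_eq_norm, ← dist_eq_norm, dist_left_lineMap, dist_lineMap_right,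
    one_sub_norm_lineMap_sq hu hv, dist_eq_norm, norm_of_nonneg hr₀,
    norm_of_nonneg (sub_nonneg.2 hr₁)]
  ring

theorem infDist_zero_range_lineMap_sq (hu : ‖u‖ = 1) (hv : ‖v‖ = 1) :
    infDist 0 (range (lineMap u v : ℝ → V)) ^ 2 = 1 - ‖u - v‖ ^ 2 / 4 := by
  have hmid : infDist 0 (range (lineMap u v : ℝ → V)) = ‖lineMap u v (1 / 2 : ℝ)‖ := by
    refine le_antisymm
      ((infDist_le_dist_of_mem (mem_range_self _)).trans_eq (dist_zero_left _)) ?_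
    refine (le_infDist (range_nonempty _)).2 ?_
    rintro _ ⟨r, rfl⟩
    rw [dist_zero_left, ← abs_norm, ← abs_norm (lineMap u v r), ← sq_le_sq]
    nlinarith [one_sub_norm_lineMap_sq hu hv r, one_sub_norm_lineMap_sq hu hv (1 / 2),
      sq_nonneg (r - 1 / 2), sq_nonneg ‖u - v‖]
  rw [hmid]
  linarith [one_sub_norm_lineMap_sq hu hv (1 / 2)]

theorem log_crossRatio_lineMap_eq_two_mul_arsinh (hu : ‖u‖ = 1) (hv : ‖v‖ = 1) (hα : 0 ≤ α)
    (hαβ : α ≤ β) (hβ : β ≤ 1) (ha : ‖lineMap u v α‖ < 1) (hb : ‖lineMap u v β‖ < 1) :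
    Real.log ((‖u - lineMap u v β‖ * ‖lineMap u v α - v‖) /
        (‖u - lineMap u v α‖ * ‖lineMap u v β - v‖)) =
      2 * arsinh (‖u - v‖ / 2 * (‖lineMap u v α - lineMap u v β‖ /
        √((1 - ‖lineMap u v α‖ ^ 2) * (1 - ‖lineMap u v β‖ ^ 2)))) := by
  have hPQ : (‖u - lineMap u v α‖ * ‖lineMap u v β - v‖) *
      (‖u - lineMap u v β‖ * ‖lineMap u v α - v‖) =
        (1 - ‖lineMap u v α‖ ^ 2) * (1 - ‖lineMap u v β‖ ^ 2) := by
    rw [← norm_sub_lineMap_mul_norm_lineMap_sub hu hv hα (hαβ.trans hβ),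
      ← norm_sub_lineMap_mul_norm_lineMap_sub hu hv (hα.trans hαβ) hβ]
    ring
  have hpos : 0 < (1 - ‖lineMap u v α‖ ^ 2) * (1 - ‖lineMap u v β‖ ^ 2) := by
    have := norm_nonneg (lineMap u v α : V)
    have := norm_nonneg (lineMap u v β : V)
    apply mul_pos <;> nlinarith
  rw [← hPQ] at hpos
  rw [log_div_eq_two_mul_arsinh (pos_of_mul_pos_left hpos (by positivity))
    (pos_of_mul_pos_right hpos (by positivity)), hPQ, norm_lineMap_four_point hα hαβ hβ]
  ring_nf

end Chord

/-- Corollary 3.5: `h(a,b) ≤ ρ(a,b) ≤ h(a,b)/√(1−m²)` for distinct points `a, b` of the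
unit disk, where `m` is the distance from the origin to the line through `a` and `b`,
`h` is the Hilbert metric (via the boundary points `u, v` with `u, a, b, v` in this order)
and `ρ` is the hyperbolic metric. -/
theorem stmt_7 (a b u v : ℂ) (ha : ‖a‖ < 1) (hb : ‖b‖ < 1) (hab : a ≠ b)
    (hu : ‖u‖ = 1) (hv : ‖v‖ = 1)
    (hua : a ∈ segment ℝ u b) (hbv : b ∈ segment ℝ a v) :
    Real.log ((‖u - b‖ * ‖a - v‖) /
        (‖u - a‖ * ‖b - v‖)) ≤
      2 * Real.arsinh (‖a - b‖ /
        Real.sqrt ((1 - (‖a‖)^2) * (1 - (‖b‖)^2))) ∧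
    2 * Real.arsinh (‖a - b‖ /
        Real.sqrt ((1 - (‖a‖)^2) * (1 - (‖b‖)^2))) ≤
      Real.log ((‖u - b‖ * ‖a - v‖) /
          (‖u - a‖ * ‖b - v‖)) /
        Real.sqrt (1 - (Metric.infDist (0 : ℂ) {z : ℂ | ∃ t : ℝ, z = a + t • (b - a)})^2) := by
  obtain ⟨α, β, hα, hαβ, hβ, rfl, rfl⟩ := exists_lineMap_of_mem_segment hab hua hbv
  have hαβ' : α ≠ β := by rintro rfl; exact hab rfl
  have hk₀ : 0 < ‖u - v‖ / 2 := half_pos (norm_sub_pos_iff.2 (by rintro rfl; simp at hab))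
  have hk₁ : ‖u - v‖ / 2 ≤ 1 := by linarith [norm_sub_le u v]
  rw [log_crossRatio_lineMap_eq_two_mul_arsinh hu hv hα hαβ hβ ha hb,
    setOf_eq_add_smul_sub_eq_range_lineMap,
    range_lineMap_lineMap hαβ', infDist_zero_range_lineMap_sq hu hv, sub_sub_cancel,
    show ‖u - v‖ ^ 2 / 4 = (‖u - v‖ / 2) ^ 2 by ring, sqrt_sq hk₀.le]
  have hs : 0 ≤ ‖lineMap u v α - lineMap u v β‖ /
      √((1 - ‖lineMap u v α‖ ^ 2) * (1 - ‖lineMap u v β‖ ^ 2)) := by positivity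
  constructor
  · gcongr
    exact mul_le_of_le_one_left hs hk₁
  · rw [le_div_iff₀ hk₀]
    linarith [mul_arsinh_le_arsinh_mul hk₀.le hk₁ hs]
end

section
/- Let u, v, c, d, w be pairwise distinct complex numbers of modulus 1 with uv ≠ cw and uv ≠ dw, and set a := (uv(c+w) − cw(u+v))/(uv − cw) and b := (uv(d+w) − dw(u+v))/(uv − dw) (the intersection points of the line through u,v with the lines through c,w and through d,w respectively). Then the absolute cross ratios agree: |u−b|·|a−v|·|u−c|·|d−v| = |u−d|·|c−v|·|u−a|·|b−v| (i.e. |u,a,b,v| = |u,c,d,v|). -/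
/-!
For `a = LIS[u,v,c,w]` both `u - a` and `v - a` factor:
`u - a = v (u - c)(u - w) / (uv - cw)` and `v - a = u (v - c)(v - w) / (uv - cw)`.
In the cross ratio `|u,a,b,v|` the factors `|u - w|`, `|v - w|`, `|u|`, `|v|` and the
denominators `|uv - cw|`, `|uv - dw|` cancel, leaving `|u,c,d,v|`.
-/

open Complex

noncomputable def lis (a b c d : ℂ) : ℂ :=
  (a * b * (c + d) - c * d * (a + b)) / (a * b - c * d)

section Lis

variable {u v c w : ℂ}

theorem lis_comm (u v c w : ℂ) : lis v u c w = lis u v c w := by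
  unfold lis; ring_nf

theorem sub_lis (h : u * v ≠ c * w) :
    u - lis u v c w = v * (u - c) * (u - w) / (u * v - c * w) := by
  rw [lis, eq_div_iff (sub_ne_zero.mpr h), sub_mul, div_mul_cancel₀ _ (sub_ne_zero.mpr h)]
  ring

theorem norm_sub_lis (h : u * v ≠ c * w) :
    ‖u - lis u v c w‖ = ‖v‖ * ‖u - c‖ * ‖u - w‖ / ‖u * v - c * w‖ := by
  rw [sub_lis h, norm_div, norm_mul, norm_mul]

theorem norm_lis_sub (h : u * v ≠ c * w) :
    ‖lis u v c w - v‖ = ‖u‖ * ‖v - c‖ * ‖v - w‖ / ‖u * v - c * w‖ := by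
  rw [norm_sub_rev, ← lis_comm, norm_sub_lis (by rwa [mul_comm]), mul_comm v u]

end Lis

theorem stmt_10_general (u v c d w : ℂ)
    (h1 : u * v ≠ c * w) (h2 : u * v ≠ d * w) :
    let a : ℂ := (u * v * (c + w) - c * w * (u + v)) / (u * v - c * w)
    let b : ℂ := (u * v * (d + w) - d * w * (u + v)) / (u * v - d * w)
    ‖u - b‖ * ‖a - v‖ * (‖u - c‖ * ‖d - v‖) =
      ‖u - d‖ * ‖c - v‖ * (‖u - a‖ * ‖b - v‖) := by
  show ‖u - lis u v d w‖ * ‖lis u v c w - v‖ * (‖u - c‖ * ‖d - v‖) =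
    ‖u - d‖ * ‖c - v‖ * (‖u - lis u v c w‖ * ‖lis u v d w - v‖)
  have hc : ‖u * v - c * w‖ ≠ 0 := norm_ne_zero_iff.mpr (sub_ne_zero.mpr h1)
  have hd : ‖u * v - d * w‖ ≠ 0 := norm_ne_zero_iff.mpr (sub_ne_zero.mpr h2)
  rw [norm_sub_lis h1, norm_sub_lis h2, norm_lis_sub h1, norm_lis_sub h2,
    norm_sub_rev d v, norm_sub_rev c v]
  field_simp

/-- Lemma 3.12 (1): for `u, c, d, v, w` on the unit circle, pairwise distinct, with
`a = LIS[u,v,c,w]` and `b = LIS[u,v,d,w]`, the absolute cross ratios agree: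
`|u,a,b,v| = |u,c,d,v|`. -/
theorem stmt_10 (u v c d w : ℂ)
    (hu : ‖u‖ = 1) (hv : ‖v‖ = 1) (hc : ‖c‖ = 1)
    (hd : ‖d‖ = 1) (hw : ‖w‖ = 1)
    (huv : u ≠ v) (huc : u ≠ c) (hud : u ≠ d) (huw : u ≠ w)
    (hvc : v ≠ c) (hvd : v ≠ d) (hvw : v ≠ w)
    (hcd : c ≠ d) (hcw : c ≠ w) (hdw : d ≠ w)
    (h1 : u * v ≠ c * w) (h2 : u * v ≠ d * w) :
    let a : ℂ := (u * v * (c + w) - c * w * (u + v)) / (u * v - c * w)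
    let b : ℂ := (u * v * (d + w) - d * w * (u + v)) / (u * v - d * w)
    ‖u - b‖ * ‖a - v‖ * (‖u - c‖ * ‖d - v‖) =
      ‖u - d‖ * ‖c - v‖ * (‖u - a‖ * ‖b - v‖) :=
  stmt_10_general u v c d w h1 h2
end

section
/- Let a, b be distinct points of the open unit disk 𝔹² ⊂ ℂ, let k := (a−b)·conj(a)·conj(b) + conj(a) − conj(b), and let w be either of the two points (|a|² − |b|² ± i·|a−b|·√((1−|a|²)(1−|b|²)))/k. Then |w| = 1, and for every z ∈ ℂ with |z| = 1 the equation (a−w)(conj(b)−conj(w))(b−z)(conj(a)−conj(z)) = (b−w)(conj(a)−conj(w))(a−z)(conj(b)−conj(z)) holds if and only if z = w; that is, the circle through a, b and w meets the unit circle only at w, so it is internally tangent to the unit circle at w. -/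
open Complex

open ComplexConjugate

/-!
On the unit circle `conj z = z⁻¹`, so after clearing denominators the circle condition becomes
the vanishing of a polynomial `F(z)` of degree two, with `F(w) = 0` trivially. Writing
`k * w = |a|² - |b|² + r` with `r = ±i |a - b| √((1 - |a|²)(1 - |b|²))`, the relation
`r² = -(a - b)(conj a - conj b)(1 - |a|²)(1 - |b|²)` forces `F(z) = -r (z - w)²`, so `w` is a
double root and the only one. The same relation gives
`|k|² = (|a|² - |b|²)² + |a - b|²(1 - |a|²)(1 - |b|²) = |k * w|²`, hence `|w| = 1`.
-/

theorem circle_poly_eq_neg_mul_sq {K : Type*} [Field K] {a b A B r w : K}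
    (hk : (a - b) * A * B + A - B ≠ 0)
    (hw : ((a - b) * A * B + A - B) * w = a * A - b * B + r)
    (hr : r ^ 2 = -((a - b) * (A - B) * (1 - a * A) * (1 - b * B))) (z : K) :
    (a - w) * (B * w - 1) * (b - z) * (A * z - 1)
      - (b - w) * (A * w - 1) * (a - z) * (B * z - 1) = -r * (z - w) ^ 2 := by
  set k := (a - b) * A * B + A - B
  have hscaled : k ^ 2 * ((a - w) * (B * w - 1) * (b - z) * (A * z - 1)
      - (b - w) * (A * w - 1) * (a - z) * (B * z - 1) + r * (z - w) ^ 2) =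
      (k * a - k * w) * (B * (k * w) - k) * (b - z) * (A * z - 1)
      - (k * b - k * w) * (A * (k * w) - k) * (a - z) * (B * z - 1) + r * (k * z - k * w) ^ 2 := by
    ring
  rw [hw] at hscaled
  have hzero : k ^ 2 * ((a - w) * (B * w - 1) * (b - z) * (A * z - 1)
      - (b - w) * (A * w - 1) * (a - z) * (B * z - 1) + r * (z - w) ^ 2) = 0 := by
    rw [hscaled]
    -- the coefficient is the quotient of the left side, a cubic in `r`, by `r ^ 2 + (a - b) * ⋯`
    linear_combination (-B * (b - z) * (A * z - 1) + A * (a - z) * (B * z - 1)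
      - 2 * (k * z - (a * A - b * B)) + r) * hr
  linear_combination (mul_eq_zero.mp hzero).resolve_left (pow_ne_zero 2 hk)

theorem circle_eq_iff_of_norm_eq_one {a b w z : ℂ} (hw : ‖w‖ = 1) (hz : ‖z‖ = 1) :
    (a - w) * (conj b - conj w) * (b - z) * (conj a - conj z) =
        (b - w) * (conj a - conj w) * (a - z) * (conj b - conj z) ↔
      (a - w) * (conj b * w - 1) * (b - z) * (conj a * z - 1) =
        (b - w) * (conj a * w - 1) * (a - z) * (conj b * z - 1) := by
  have hw0 : w ≠ 0 := norm_ne_zero_iff.mp (by simp [hw])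
  have hz0 : z ≠ 0 := norm_ne_zero_iff.mp (by simp [hz])
  have clear_conj (x y : ℂ) :
      (x - conj w) * (y - conj z) * (w * z) = (x * w - 1) * (y * z - 1) := by
    rw [← inv_eq_conj hw, ← inv_eq_conj hz]
    field_simp
  rw [← mul_left_inj' (mul_ne_zero hw0 hz0)]
  constructor <;> intro h
  · linear_combination h - (a - w) * (b - z) * clear_conj (conj b) (conj a)
      + (b - w) * (a - z) * clear_conj (conj a) (conj b)
  · linear_combination h + (a - w) * (b - z) * clear_conj (conj b) (conj a)
      - (b - w) * (a - z) * clear_conj (conj a) (conj b)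

theorem mul_conj_sub_mul_one_sub_mul_conj (a b : ℂ) :
    (a - b) * (conj a - conj b) * (1 - a * conj a) * (1 - b * conj b) =
      ((‖a - b‖ ^ 2 * ((1 - ‖a‖ ^ 2) * (1 - ‖b‖ ^ 2)) : ℝ) : ℂ) := by
  rw [← map_sub, mul_conj', mul_conj', mul_conj']
  push_cast
  ring

theorem normSq_tangencyDenom (a b : ℂ) :
    normSq ((a - b) * conj a * conj b + conj a - conj b) =
      (‖a‖ ^ 2 - ‖b‖ ^ 2) ^ 2 + ‖a - b‖ ^ 2 * ((1 - ‖a‖ ^ 2) * (1 - ‖b‖ ^ 2)) := by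
  apply ofReal_injective
  rw [← mul_conj]
  have h := mul_conj_sub_mul_one_sub_mul_conj a b
  push_cast at h ⊢
  rw [← h, ← mul_conj', ← mul_conj']
  simp only [map_sub, map_add, map_mul, conj_conj]
  ring

/-- Lemma 3.13 (1) (tangency points): for distinct `a, b` in the unit disk,
`k = (a−b)·conj a·conj b + conj a − conj b`, and `w` either of the two points
`(|a|²−|b|² ± i|a−b|√((1−|a|²)(1−|b|²)))/k`, one has `|w| = 1` and the circle through
`a, b, w` meets the unit circle exactly at `w` (internal tangency at `w`). -/
theorem stmt_13 (a b w : ℂ) (ha : ‖a‖ < 1) (hb : ‖b‖ < 1) (hab : a ≠ b)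
    (hw : w = ((((‖a‖)^2 - (‖b‖)^2 : ℝ) : ℂ)
          + Complex.I * ((‖a - b‖ : ℝ) : ℂ)
            * ((Real.sqrt ((1 - (‖a‖)^2) * (1 - (‖b‖)^2)) : ℝ) : ℂ)) /
          ((a - b) * (starRingEnd ℂ a) * (starRingEnd ℂ b)
            + (starRingEnd ℂ a) - (starRingEnd ℂ b)) ∨
      w = ((((‖a‖)^2 - (‖b‖)^2 : ℝ) : ℂ)
          - Complex.I * ((‖a - b‖ : ℝ) : ℂ)
            * ((Real.sqrt ((1 - (‖a‖)^2) * (1 - (‖b‖)^2)) : ℝ) : ℂ)) /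
          ((a - b) * (starRingEnd ℂ a) * (starRingEnd ℂ b)
            + (starRingEnd ℂ a) - (starRingEnd ℂ b))) :
    ‖w‖ = 1 ∧
    ∀ z : ℂ, ‖z‖ = 1 →
      ((a - w) * ((starRingEnd ℂ b) - (starRingEnd ℂ w)) * (b - z)
          * ((starRingEnd ℂ a) - (starRingEnd ℂ z)) =
        (b - w) * ((starRingEnd ℂ a) - (starRingEnd ℂ w)) * (a - z)
          * ((starRingEnd ℂ b) - (starRingEnd ℂ z)) ↔ z = w) := by
  set k := (a - b) * conj a * conj b + conj a - conj b
  set d : ℝ := ‖a‖ ^ 2 - ‖b‖ ^ 2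
  set ρ : ℝ := ‖a - b‖ * √((1 - ‖a‖ ^ 2) * (1 - ‖b‖ ^ 2))
  have hdisk : 0 < (1 - ‖a‖ ^ 2) * (1 - ‖b‖ ^ 2) :=
    mul_pos (by nlinarith [norm_nonneg a]) (by nlinarith [norm_nonneg b])
  have hρsq : ρ ^ 2 = ‖a - b‖ ^ 2 * ((1 - ‖a‖ ^ 2) * (1 - ‖b‖ ^ 2)) := by
    rw [mul_pow, Real.sq_sqrt hdisk.le]
  have hρ : 0 < ρ := mul_pos (norm_pos_iff.mpr (sub_ne_zero.mpr hab)) (Real.sqrt_pos.mpr hdisk)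
  obtain ⟨σ, hσ0, hσ, rfl⟩ : ∃ σ : ℝ, σ ≠ 0 ∧ σ ^ 2 = ρ ^ 2 ∧ w = (d + σ * I) / k := by
    rcases hw with rfl | rfl
    · exact ⟨ρ, hρ.ne', rfl, by simp only [ρ, ofReal_mul]; ring⟩
    · exact ⟨-ρ, neg_ne_zero.mpr hρ.ne', neg_sq ρ, by simp only [ρ, ofReal_neg, ofReal_mul]; ring⟩
  have hnormSq : normSq k = normSq (d + σ * I) := by
    rw [normSq_add_mul_I, normSq_tangencyDenom, hσ, hρsq]
  have hk : k ≠ 0 := by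
    rw [← normSq_pos, hnormSq, normSq_add_mul_I]
    positivity
  have hw1 : ‖(d + σ * I) / k‖ = 1 := by
    rw [norm_div, div_eq_one_iff_eq (norm_ne_zero_iff.mpr hk),
      ← sq_eq_sq₀ (norm_nonneg _) (norm_nonneg _), Complex.sq_norm, Complex.sq_norm, hnormSq]
  refine ⟨hw1, fun z hz => ?_⟩
  have hkw : k * ((d + σ * I) / k) = a * conj a - b * conj b + σ * I := by
    rw [mul_div_cancel₀ _ hk, mul_conj', mul_conj', ofReal_sub, ofReal_pow, ofReal_pow]
  have hσI : ((σ : ℂ) * I) ^ 2 =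
      -((a - b) * (conj a - conj b) * (1 - a * conj a) * (1 - b * conj b)) := by
    rw [mul_conj_sub_mul_one_sub_mul_conj, ← hρsq, ← hσ]
    push_cast
    rw [mul_pow, I_sq]
    ring
  rw [circle_eq_iff_of_norm_eq_one hw1 hz, ← sub_eq_zero, circle_poly_eq_neg_mul_sq hk hkw hσI z]
  simp [hσ0, I_ne_zero, sub_eq_zero]
end

section
/- Let a, b, c, d be points on the unit circle occurring in this cyclic order, and let u be a point of the unit circle on the arc between a and b not containing c and d (with u distinct from a, b, c, d and ab ≠ ud, ab ≠ uc). Set a₂ := LIS[a,b,u,d] and b₂ := LIS[a,b,u,c]. Then (|a−b₂|·|a₂−b|)/(|a−a₂|·|b₂−b|) = (|a−c|·|b−d|)/(|a−d|·|b−c|); in particular this quantity, which equals exp(h(a₂,b₂)) for the Hilbert metric of the unit disk, is independent of u. -/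
/-!
Both intersection points lie on the chord through `a` and `b`, and the differences
`a - LIS[a,b,u,x]` and `LIS[a,b,u,x] - b` factor as `b (a - u) (a - x) / (ab - ux)` and
`a (u - b) (b - x) / (ab - ux)`. In the cross ratio the factors depending on `u` and the
denominators `ab - ud`, `ab - uc` appear equally in numerator and denominator, leaving
`|a - c| |b - d| / (|a - d| |b - c|)`.
-/

open Complex

/-- `LIS[a, b, c, d]`: for `a, b, c, d` on the unit circle, the intersection of the lines
`ab` and `cd`. -/
noncomputable def chordIntersection (a b c d : ℂ) : ℂ :=
  (a * b * (c + d) - c * d * (a + b)) / (a * b - c * d)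

section chordIntersection

variable {a b c d : ℂ}

lemma sub_chordIntersection (h : a * b ≠ c * d) :
    a - chordIntersection a b c d = b * (a - c) * (a - d) / (a * b - c * d) := by
  have := sub_ne_zero.mpr h
  unfold chordIntersection
  field_simp
  ring

lemma chordIntersection_sub (h : a * b ≠ c * d) :
    chordIntersection a b c d - b = a * (c - b) * (b - d) / (a * b - c * d) := by
  have := sub_ne_zero.mpr h
  unfold chordIntersection
  field_simp
  ring

end chordIntersection

theorem crossRatio_chordIntersection {a b c d u : ℂ} (ha : a ≠ 0) (hb : b ≠ 0)
    (hau : a ≠ u) (hub : u ≠ b) (hd : a * b ≠ u * d) (hc : a * b ≠ u * c) :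
    ‖a - chordIntersection a b u c‖ * ‖chordIntersection a b u d - b‖ /
        (‖a - chordIntersection a b u d‖ * ‖chordIntersection a b u c - b‖) =
      ‖a - c‖ * ‖b - d‖ / (‖a - d‖ * ‖b - c‖) := by
  set K : ℂ := a * b * (a - u) * (u - b) / (a * b - u * d) / (a * b - u * c) with hK_def
  have hK : ‖K‖ ≠ 0 := by
    simp [hK_def, sub_eq_zero, ha, hb, hau, hub, hd, hc]
  have hnum : (a - chordIntersection a b u c) * (chordIntersection a b u d - b) =
      K * ((a - c) * (b - d)) := by
    rw [sub_chordIntersection hc, chordIntersection_sub hd, hK_def]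
    ring
  have hden : (a - chordIntersection a b u d) * (chordIntersection a b u c - b) =
      K * ((a - d) * (b - c)) := by
    rw [sub_chordIntersection hd, chordIntersection_sub hc, hK_def]
    ring
  rw [← norm_mul, ← norm_mul, hnum, hden, norm_mul K, norm_mul K, mul_div_mul_left _ _ hK,
    norm_mul, norm_mul]

lemma exp_mul_I_ne_of_lt {s t : ℝ} (hst : s < t) (hts : t < s + 2 * Real.pi) :
    exp (s * I) ≠ exp (t * I) := fun h =>
  hst.ne <| Circle.exp_injOn_Icc (by linarith) ⟨le_rfl, hst.le⟩ ⟨hst.le, le_rfl⟩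
    (Subtype.ext h)

theorem stmt_15_general (a b c d u : ℂ) (θ₁ θ₂ θ₃ θ₄ θ : ℝ)
    (h23 : θ₂ < θ₃) (h34 : θ₃ < θ₄) (h41 : θ₄ < θ₁ + 2 * Real.pi)
    (ha : a = Complex.exp (θ₁ * Complex.I)) (hb : b = Complex.exp (θ₂ * Complex.I))
    (hu : u = Complex.exp (θ * Complex.I)) (hθ1 : θ₁ < θ) (hθ2 : θ < θ₂)
    (h1 : a * b ≠ u * d) (h2 : a * b ≠ u * c) :
    let a₂ : ℂ := (a * b * (u + d) - u * d * (a + b)) / (a * b - u * d)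
    let b₂ : ℂ := (a * b * (u + c) - u * c * (a + b)) / (a * b - u * c)
    (‖a - b₂‖ * ‖a₂ - b‖) /
        (‖a - a₂‖ * ‖b₂ - b‖) =
      (‖a - c‖ * ‖b - d‖) /
        (‖a - d‖ * ‖b - c‖) := by
  have hab : θ₂ < θ₁ + 2 * Real.pi := by linarith
  subst ha hb hu
  exact crossRatio_chordIntersection (exp_ne_zero _) (exp_ne_zero _)
    (exp_mul_I_ne_of_lt hθ1 (by linarith)) (exp_mul_I_ne_of_lt hθ2 (by linarith)) h1 h2

/-- Corollary 3.25 (1): for `a, b, c, d` in this cyclic order on the unit circle, `u` on the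
arc between `a` and `b` not containing `c, d`, with `a₂ = LIS[a,b,u,d]` and
`b₂ = LIS[a,b,u,c]`, the quantity
`(|a−b₂||a₂−b|)/(|a−a₂||b₂−b|) = exp h(a₂,b₂)` equals `(|a−c||b−d|)/(|a−d||b−c|)`;
in particular, it is independent of `u`. -/
theorem stmt_15 (a b c d u : ℂ) (θ₁ θ₂ θ₃ θ₄ θ : ℝ)
    (h12 : θ₁ < θ₂) (h23 : θ₂ < θ₃) (h34 : θ₃ < θ₄) (h41 : θ₄ < θ₁ + 2 * Real.pi)
    (ha : a = Complex.exp (θ₁ * Complex.I)) (hb : b = Complex.exp (θ₂ * Complex.I))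
    (hc : c = Complex.exp (θ₃ * Complex.I)) (hd : d = Complex.exp (θ₄ * Complex.I))
    (hu : u = Complex.exp (θ * Complex.I)) (hθ1 : θ₁ < θ) (hθ2 : θ < θ₂)
    (h1 : a * b ≠ u * d) (h2 : a * b ≠ u * c) :
    let a₂ : ℂ := (a * b * (u + d) - u * d * (a + b)) / (a * b - u * d)
    let b₂ : ℂ := (a * b * (u + c) - u * c * (a + b)) / (a * b - u * c)
    (‖a - b₂‖ * ‖a₂ - b‖) /
        (‖a - a₂‖ * ‖b₂ - b‖) =
      (‖a - c‖ * ‖b - d‖) /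
        (‖a - d‖ * ‖b - c‖) :=
  stmt_15_general a b c d u θ₁ θ₂ θ₃ θ₄ θ h23 h34 h41 ha hb hu hθ1 hθ2 h1 h2
end

section
/- Let a, b be real numbers with −1 < a < b < 1. Then b − a ≤ 2·tanh((1/4)·log(((1+b)(1−a))/((1−b)(1+a)))). In other words, for D = (−1,1) one has |a − b| ≤ 2·tanh(h_D(a,b)/4), where h_D(a,b) = log|−1, a, b, 1| is the Hilbert distance of the interval (−1,1). -/
/-- Proposition 3.26: for `−1 < a < b < 1`,
`b − a ≤ 2·tanh((1/4)·log(((1+b)(1−a))/((1−b)(1+a))))`,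
i.e. `|a − b| ≤ 2·tanh(h_D(a,b)/4)` for the Hilbert metric of `D = (−1,1)`. -/
theorem stmt_17 (a b : ℝ) (ha : -1 < a) (hab : a < b) (hb : b < 1) :
    b - a ≤ 2 * Real.tanh ((1 / 4) * Real.log (((1 + b) * (1 - a)) / ((1 - b) * (1 + a)))) := by
  have h1a : (0:ℝ) < 1 + a := by linarith
  have h1b : (0:ℝ) < 1 - b := by linarith
  have h1a' : (0:ℝ) < 1 - a := by linarith
  have h1b' : (0:ℝ) < 1 + b := by linarith
  set t : ℝ := ((1 + b) * (1 - a)) / ((1 - b) * (1 + a)) with htdef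
  have ht : 0 < t := div_pos (by positivity) (by positivity)
  set x : ℝ := (1 / 4) * Real.log t with hxdef
  -- s = exp(2x) = sqrt t
  have hden : (0:ℝ) < 2 + a - b := by linarith
  have hu : (0:ℝ) ≤ (2 + b - a) / (2 + a - b) := div_nonneg (by linarith) hden.le
  have hsq : ((2 + b - a) / (2 + a - b)) ^ 2 ≤ t := by
    rw [div_pow, htdef, div_le_div_iff₀ (by positivity) (by positivity)]
    nlinarith [sq_nonneg (b - a), mul_pos h1a h1b, mul_pos h1a' h1b',
      sq_nonneg (a + b), mul_pos (mul_pos h1a h1b) (mul_pos h1a' h1b')]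
  have hs : (2 + b - a) / (2 + a - b) ≤ Real.sqrt t := by
    rw [show Real.sqrt t = t ^ ((1:ℝ)/2) from Real.sqrt_eq_rpow t]
    calc (2 + b - a) / (2 + a - b)
        = (((2 + b - a) / (2 + a - b)) ^ 2) ^ ((1:ℝ)/2) := by
          rw [← Real.rpow_natCast _ 2, ← Real.rpow_mul hu]; norm_num
      _ ≤ t ^ ((1:ℝ)/2) := Real.rpow_le_rpow (by positivity) hsq (by norm_num)
  have hexp : Real.exp (2 * x) = Real.sqrt t := by
    rw [Real.sqrt_eq_rpow, Real.rpow_def_of_pos ht, hxdef]; ring_nf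
  have htanh : Real.tanh x = (Real.exp (2 * x) - 1) / (Real.exp (2 * x) + 1) := by
    rw [Real.tanh_eq_sinh_div_cosh, Real.sinh_eq, Real.cosh_eq,
      show (2:ℝ) * x = x + x by ring, Real.exp_add, Real.exp_neg]
    have h0 := Real.exp_pos x
    field_simp
  rw [htanh, hexp]
  have hspos : (0:ℝ) < Real.sqrt t + 1 := by positivity
  rw [show (2:ℝ) * ((Real.sqrt t - 1) / (Real.sqrt t + 1))
      = (2 * (Real.sqrt t - 1)) / (Real.sqrt t + 1) from by ring, le_div_iff₀ hspos]
  have hs' : 2 + b - a ≤ Real.sqrt t * (2 + a - b) := (div_le_iff₀ hden).mp hs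
  nlinarith [hs']
end

section
/- Let n ≥ 1, let c be a point of the Euclidean space ℝⁿ with 0 < ‖c‖ < 1, let R > 0, and set s := ‖c‖ and α := cosh²(R/2)·(1 − s²). Then for every x ∈ ℝⁿ, the equation (1 − ⟨c,x⟩)² = α·(1 − ‖x‖²) holds if and only if, writing λ := ⟨c,x⟩/s and z := x − (⟨c,x⟩/s²)·c, one has (λ − s/(s²+α))²·(s²+α)²/(α·(s²+α−1)) + ‖z‖²·(s²+α)/(s²+α−1) = 1; moreover every such x satisfies ‖x‖ < 1. Consequently the Hilbert sphere S_h(c,R) = {x ∈ 𝔹ⁿ : h(x,c) = R} is the ellipsoid of revolution with center c/(cosh²(R/2) − s²·sinh²(R/2)), minor semi-axis (along c) equal to (1/2)(1−s²)·sinh(R)/(cosh²(R/2) − s²·sinh²(R/2)) and all other semi-axes equal to sinh(R/2)·√(1−s²)/√(cosh²(R/2) − s²·sinh²(R/2)). -/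
/-!
Write `t = ⟨c,x⟩`, `s = ‖c‖`, `σ = s² + α`. Splitting `x` into its component `(t/s²)·c` along `c`
and the orthogonal part `z`, so that `‖z‖² = ‖x‖² − t²/s²`, the ellipsoid expression minus one
equals `σ((1−t)² − α(1−‖x‖²)) / (α(σ−1))`; this gives the equivalence. A point on the sphere has
`1 − ‖x‖² ≥ 0`, and `‖x‖ = 1` would force `⟨c,x⟩ = 1 > ‖c‖‖x‖`. The formulas for the centre and
semi-axes follow from `cosh² − sinh² = 1` and `sinh R = 2 sinh(R/2) cosh(R/2)`.
-/

open Real RealInnerProductSpace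

section InnerProductSpace

variable {E : Type*} [NormedAddCommGroup E] [InnerProductSpace ℝ E]

theorem norm_sub_inner_div_smul_sq {c : E} (hc : c ≠ 0) (x : E) :
    ‖x - (⟪c, x⟫ / ‖c‖ ^ 2) • c‖ ^ 2 = ‖x‖ ^ 2 - ⟪c, x⟫ ^ 2 / ‖c‖ ^ 2 := by
  have hc' : ‖c‖ ≠ 0 := norm_ne_zero_iff.mpr hc
  rw [norm_sub_sq_real, real_inner_smul_right, norm_smul, real_inner_comm, Real.norm_eq_abs,
    mul_pow, sq_abs]
  field_simp
  ring

theorem norm_lt_one_of_sq_one_sub_inner_eq {c x : E} {α : ℝ} (hα : 0 < α) (hc : ‖c‖ < 1)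
    (h : (1 - ⟪c, x⟫) ^ 2 = α * (1 - ‖x‖ ^ 2)) : ‖x‖ < 1 := by
  have hx : ‖x‖ ^ 2 ≤ 1 := by nlinarith [sq_nonneg (1 - ⟪c, x⟫)]
  rcases (pow_le_one_iff_of_nonneg (norm_nonneg x) two_ne_zero).mp hx |>.lt_or_eq with hlt | heq
  · exact hlt
  · have hinner : ⟪c, x⟫ = 1 := by
      rw [heq] at h
      nlinarith
    have := real_inner_le_norm c x
    rw [hinner, heq] at this
    linarith

end InnerProductSpace

theorem ellipsoid_expr_sub_one {s α t N : ℝ} (hs : s ≠ 0) (hα : α ≠ 0) (hσ : s ^ 2 + α ≠ 0)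
    (hσ1 : s ^ 2 + α - 1 ≠ 0) :
    (t / s - s / (s ^ 2 + α)) ^ 2 * (s ^ 2 + α) ^ 2 / (α * (s ^ 2 + α - 1)) +
        (N - t ^ 2 / s ^ 2) * (s ^ 2 + α) / (s ^ 2 + α - 1) - 1 =
      (s ^ 2 + α) * ((1 - t) ^ 2 - α * (1 - N)) / (α * (s ^ 2 + α - 1)) := by
  field_simp
  ring

theorem sq_one_sub_eq_iff_ellipsoid {s α t N : ℝ} (hs : s ≠ 0) (hα : α ≠ 0)
    (hσ : s ^ 2 + α ≠ 0) (hσ1 : s ^ 2 + α - 1 ≠ 0) :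
    (1 - t) ^ 2 = α * (1 - N) ↔
      (t / s - s / (s ^ 2 + α)) ^ 2 * (s ^ 2 + α) ^ 2 / (α * (s ^ 2 + α - 1)) +
        (N - t ^ 2 / s ^ 2) * (s ^ 2 + α) / (s ^ 2 + α - 1) = 1 := by
  rw [← sub_eq_zero, ← sub_eq_zero (b := (1 : ℝ)), ellipsoid_expr_sub_one hs hα hσ hσ1]
  simp [hσ, hα, hσ1]

section Hyperbolic

variable (s y : ℝ)

theorem sq_add_cosh_sq_mul_one_sub_sq :
    s ^ 2 + cosh y ^ 2 * (1 - s ^ 2) = cosh y ^ 2 - s ^ 2 * sinh y ^ 2 := by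
  rw [cosh_sq]
  ring

theorem sq_add_cosh_sq_mul_one_sub_sq_sub_one :
    s ^ 2 + cosh y ^ 2 * (1 - s ^ 2) - 1 = sinh y ^ 2 * (1 - s ^ 2) := by
  rw [cosh_sq]
  ring

end Hyperbolic

theorem sqrt_cosh_sq_mul_sinh_sq_mul {s : ℝ} (hs : s ^ 2 ≤ 1) {R : ℝ} (hR : 0 ≤ R) :
    √(cosh (R / 2) ^ 2 * (1 - s ^ 2) * (sinh (R / 2) ^ 2 * (1 - s ^ 2))) =
      1 / 2 * (1 - s ^ 2) * sinh R := by
  have hsinh : 0 ≤ sinh (R / 2) := sinh_nonneg_iff.mpr (by linarith)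
  have hsinh_two_mul : sinh R = 2 * sinh (R / 2) * cosh (R / 2) := by
    rw [← sinh_two_mul, mul_div_cancel₀ R two_ne_zero]
  rw [show cosh (R / 2) ^ 2 * (1 - s ^ 2) * (sinh (R / 2) ^ 2 * (1 - s ^ 2)) =
      (cosh (R / 2) * sinh (R / 2) * (1 - s ^ 2)) ^ 2 by ring,
    sqrt_sq (by have := cosh_pos (R / 2); positivity), hsinh_two_mul]
  ring

theorem stmt_19_general (n : ℕ) (c : EuclideanSpace ℝ (Fin n))
    (hc0 : 0 < ‖c‖) (hc1 : ‖c‖ < 1) (R : ℝ) (hR : 0 < R) :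
    let s : ℝ := ‖c‖
    let α : ℝ := Real.cosh (R / 2)^2 * (1 - s^2)
    (∀ x : EuclideanSpace ℝ (Fin n),
      ((1 - (inner ℝ c x : ℝ))^2 = α * (1 - ‖x‖^2) ↔
        ((inner ℝ c x : ℝ) / s - s / (s^2 + α))^2 * (s^2 + α)^2 / (α * (s^2 + α - 1)) +
          ‖x - ((inner ℝ c x : ℝ) / s^2) • c‖^2 * (s^2 + α) / (s^2 + α - 1) = 1) ∧
      ((1 - (inner ℝ c x : ℝ))^2 = α * (1 - ‖x‖^2) → ‖x‖ < 1)) ∧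
    s^2 + α = Real.cosh (R / 2)^2 - s^2 * Real.sinh (R / 2)^2 ∧
    Real.sqrt (α * (s^2 + α - 1)) / (s^2 + α) =
      (1 / 2) * (1 - s^2) * Real.sinh R /
        (Real.cosh (R / 2)^2 - s^2 * Real.sinh (R / 2)^2) ∧
    Real.sqrt ((s^2 + α - 1) / (s^2 + α)) =
      Real.sinh (R / 2) * Real.sqrt (1 - s^2) /
        Real.sqrt (Real.cosh (R / 2)^2 - s^2 * Real.sinh (R / 2)^2) := by
  intro s α
  have hs2 : 0 < 1 - s ^ 2 := by nlinarith
  have hsinh : 0 < sinh (R / 2) := sinh_pos_iff.mpr (half_pos hR)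
  have hα : 0 < α := by have := cosh_pos (R / 2); positivity
  have hσ : s ^ 2 + α = cosh (R / 2) ^ 2 - s ^ 2 * sinh (R / 2) ^ 2 :=
    sq_add_cosh_sq_mul_one_sub_sq s (R / 2)
  have hσ1 : s ^ 2 + α - 1 = sinh (R / 2) ^ 2 * (1 - s ^ 2) :=
    sq_add_cosh_sq_mul_one_sub_sq_sub_one s (R / 2)
  have hσ1_pos : 0 < s ^ 2 + α - 1 := by rw [hσ1]; positivity
  refine ⟨fun x => ⟨?_, norm_lt_one_of_sq_one_sub_inner_eq hα hc1⟩, hσ, ?_, ?_⟩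
  · have hz : ‖x - (⟪c, x⟫ / s ^ 2) • c‖ ^ 2 = ‖x‖ ^ 2 - ⟪c, x⟫ ^ 2 / s ^ 2 :=
      norm_sub_inner_div_smul_sq (norm_pos_iff.mp hc0) x
    rw [hz]
    exact sq_one_sub_eq_iff_ellipsoid hc0.ne' hα.ne' (by linarith) hσ1_pos.ne'
  · rw [hσ1, ← hσ, sqrt_cosh_sq_mul_sinh_sq_mul (by linarith) hR.le]
  · rw [← hσ, hσ1, sqrt_div' _ (by linarith), sqrt_mul' _ hs2.le, sqrt_sq hsinh.le]

/-- Theorem 4.2: for `c` in the unit ball of `ℝⁿ` with `0 < ‖c‖ < 1` and `R > 0`, setting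
`s = ‖c‖` and `α = cosh²(R/2)(1−s²)`, a point `x` satisfies `(1−⟨c,x⟩)² = α(1−‖x‖²)`
(i.e. `h(x,c) = R`) iff it satisfies the canonical ellipsoid equation with center
`c/(s²+α)`, minor semi-axis `√(α(s²+α−1))/(s²+α)` along `c` and the other semi-axes
`√((s²+α−1)/(s²+α))`; moreover every such `x` lies in the unit ball. Consequently the
Hilbert sphere `S_h(c,R)` is the ellipsoid of revolution with center
`c/(cosh²(R/2) − s²sinh²(R/2))`, minor semi-axis `(1/2)(1−s²)sinh R/(cosh²(R/2) − s²sinh²(R/2))`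
and the other semi-axes `sinh(R/2)√(1−s²)/√(cosh²(R/2) − s²sinh²(R/2))`. -/
theorem stmt_19 (n : ℕ) (hn : 1 ≤ n) (c : EuclideanSpace ℝ (Fin n))
    (hc0 : 0 < ‖c‖) (hc1 : ‖c‖ < 1) (R : ℝ) (hR : 0 < R) :
    let s : ℝ := ‖c‖
    let α : ℝ := Real.cosh (R / 2)^2 * (1 - s^2)
    (∀ x : EuclideanSpace ℝ (Fin n),
      ((1 - (inner ℝ c x : ℝ))^2 = α * (1 - ‖x‖^2) ↔
        ((inner ℝ c x : ℝ) / s - s / (s^2 + α))^2 * (s^2 + α)^2 / (α * (s^2 + α - 1)) +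
          ‖x - ((inner ℝ c x : ℝ) / s^2) • c‖^2 * (s^2 + α) / (s^2 + α - 1) = 1) ∧
      ((1 - (inner ℝ c x : ℝ))^2 = α * (1 - ‖x‖^2) → ‖x‖ < 1)) ∧
    s^2 + α = Real.cosh (R / 2)^2 - s^2 * Real.sinh (R / 2)^2 ∧
    Real.sqrt (α * (s^2 + α - 1)) / (s^2 + α) =
      (1 / 2) * (1 - s^2) * Real.sinh R /
        (Real.cosh (R / 2)^2 - s^2 * Real.sinh (R / 2)^2) ∧
    Real.sqrt ((s^2 + α - 1) / (s^2 + α)) =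
      Real.sinh (R / 2) * Real.sqrt (1 - s^2) /
        Real.sqrt (Real.cosh (R / 2)^2 - s^2 * Real.sinh (R / 2)^2) :=
  stmt_19_general n c hc0 hc1 R hR
end
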